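/- Let C(x₁,x₂) = N(x₁;0,1)·N(x₂;0,σ'(x₁)) where σ'(x₁) = 1 if x₁ = 0 and |x₁|ⁿ otherwise (n ≥ 1), and let D(x₁,x₂) = N(x₁;θ₁,1)·N(x₂;θ₂,1). Then E_{(x₁,x₂)~D}[|log C(x₁,x₂)|] = ∞ for all θ₁, θ₂ ∈ ℝ, hence the KL divergence KL(D || C/Z) is undefined. -/

import Mathlib

open MeasureTheory

/-- Density of the one-dimensional normal distribution with mean `μ` and
standard deviation `σ`. -/
noncomputable def normalDensity (μ σ v : ℝ) : ℝ :=
  (Real.sqrt (2 * Real.pi) * σ)⁻¹ * Real.exp (-((v - μ) ^ 2) / (2 * σ ^ 2))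

/-- The model's conditional standard deviation: `σ'(x₁) = |x₁|ⁿ` for `x₁ ≠ 0`. -/
noncomputable def condSigma (n : ℕ) (x₁ : ℝ) : ℝ :=
  if x₁ = 0 then 1 else |x₁| ^ n

lemma normalDensity_pos (μ σ v : ℝ) (hσ : 0 < σ) : 0 < normalDensity μ σ v := by
  have : 0 < Real.sqrt (2 * Real.pi) := Real.sqrt_pos.2 (by positivity)
  unfold normalDensity
  positivity

/-- Lower bound for the unit-variance normal density. -/
lemma normalDensity_ge (μ v R : ℝ) (h : |v - μ| ≤ R) :
    (Real.sqrt (2 * Real.pi))⁻¹ * Real.exp (-(R ^ 2) / 2) ≤ normalDensity μ 1 v := by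
  have hs : 0 < Real.sqrt (2 * Real.pi) := Real.sqrt_pos.2 (by positivity)
  unfold normalDensity
  rw [mul_one]
  have hsq : (v - μ) ^ 2 ≤ R ^ 2 := by
    rw [← sq_abs]
    exact pow_le_pow_left₀ (abs_nonneg _) h 2
  have : Real.exp (-(R ^ 2) / 2) ≤ Real.exp (-((v - μ) ^ 2) / (2 * 1 ^ 2)) := by
    apply Real.exp_le_exp.2
    rw [one_pow, mul_one]
    linarith
  exact mul_le_mul_of_nonneg_left this (by positivity)

/-- Key bound: `-log C ≥ (x₁²)⁻¹` on the region `0 < x₁ < 1`, `|x₂| ≥ n + 2`. -/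
lemma neg_log_C_ge (n : ℕ) (hn : 1 ≤ n) (x₁ x₂ : ℝ) (h1 : 0 < x₁) (h1' : x₁ < 1)
    (h2 : (n : ℝ) + 2 ≤ |x₂|) :
    (x₁ ^ 2)⁻¹ ≤ -Real.log (normalDensity 0 1 x₁ * normalDensity 0 (condSigma n x₁) x₂) := by
  have hσ : condSigma n x₁ = x₁ ^ n := by
    rw [condSigma, if_neg h1.ne', abs_of_pos h1]
  have hs : 0 < Real.sqrt (2 * Real.pi) := Real.sqrt_pos.2 (by positivity)
  have hxn : 0 < x₁ ^ n := pow_pos h1 n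
  set q : ℝ := (x₁ ^ n) ^ 2 with hq
  have hqpos : 0 < q := by positivity
  have hlog : Real.log (normalDensity 0 1 x₁ * normalDensity 0 (condSigma n x₁) x₂)
      = -(Real.log (Real.sqrt (2 * Real.pi))) + (-(x₁ ^ 2) / 2)
        + (-(Real.log (Real.sqrt (2 * Real.pi)) + (n : ℝ) * Real.log x₁) + (-(x₂ ^ 2) / (2 * q))) := by
    rw [hσ]
    unfold normalDensity
    rw [Real.log_mul (by positivity) (by positivity),
      Real.log_mul (by positivity) (by positivity),
      Real.log_mul (by positivity) (by positivity),
      Real.log_exp, Real.log_exp, Real.log_inv, Real.log_inv, mul_one,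
      Real.log_mul hs.ne' hxn.ne', Real.log_pow]
    rw [hq]
    ring_nf
  -- facts
  have f1 : 0 ≤ Real.log (Real.sqrt (2 * Real.pi)) := Real.log_nonneg (Real.one_le_sqrt.2 (by nlinarith [Real.pi_gt_three]))
  have flog : -(x₁⁻¹) ≤ Real.log x₁ := by
    have := Real.one_sub_inv_le_log_of_pos h1
    linarith
  have f2 : -((n : ℝ) * x₁⁻¹) ≤ (n : ℝ) * Real.log x₁ := by
    have := mul_le_mul_of_nonneg_left flog (by positivity : (0:ℝ) ≤ (n:ℝ))
    linarith
  have hq1 : q ≤ x₁ := by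
    calc q = x₁ ^ (n * 2) := by rw [hq, ← pow_mul]
    _ ≤ x₁ ^ 1 := pow_le_pow_of_le_one h1.le h1'.le (by omega)
    _ = x₁ := pow_one x₁
  have hq2 : q ≤ x₁ ^ 2 := by
    calc q = x₁ ^ (n * 2) := by rw [hq, ← pow_mul]
    _ ≤ x₁ ^ 2 := pow_le_pow_of_le_one h1.le h1'.le (by omega)
  have f3 : x₁⁻¹ ≤ q⁻¹ := inv_anti₀ hqpos hq1
  have f5 : (x₁ ^ 2)⁻¹ ≤ q⁻¹ := inv_anti₀ hqpos hq2
  have f4 : ((n : ℝ) + 2) ^ 2 ≤ x₂ ^ 2 := by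
    rw [← sq_abs x₂]
    exact pow_le_pow_left₀ (by positivity) h2 2
  have f6 : ((n : ℝ) + 2) ^ 2 / (2 * q) ≤ x₂ ^ 2 / (2 * q) := by gcongr
  have f7 : ((n : ℝ) + 2) ^ 2 / (2 * q) = (((n : ℝ) + 2) ^ 2 / 2) * q⁻¹ := by
    field_simp
  have f8 : (1 + (n : ℝ)) * q⁻¹ ≤ (((n : ℝ) + 2) ^ 2 / 2) * q⁻¹ := by
    have hcoef : (1 + (n : ℝ)) ≤ ((n : ℝ) + 2) ^ 2 / 2 := by nlinarith [Nat.cast_nonneg (α := ℝ) n]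
    exact mul_le_mul_of_nonneg_right hcoef (by positivity)
  have f3n : (n : ℝ) * x₁⁻¹ ≤ (n : ℝ) * q⁻¹ :=
    mul_le_mul_of_nonneg_left f3 (Nat.cast_nonneg n)
  have hx2 : 0 ≤ x₁ ^ 2 / 2 := by positivity
  have f9 : -x₂ ^ 2 / (2 * q) = -(x₂ ^ 2 / (2 * q)) := neg_div _ _
  have f10 : -x₁ ^ 2 / 2 = -(x₁ ^ 2 / 2) := neg_div _ _
  rw [hlog]
  linarith [f6, f8, f5, f2, f1, hx2, f7, f3n, f9, f10]

lemma lintegral_inv_sq_Ioo_top :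
    ∫⁻ a in Set.Ioo (0 : ℝ) 1, ENNReal.ofReal ((a ^ 2)⁻¹) = ⊤ := by
  by_contra h
  have hmeas : AEStronglyMeasurable (fun a : ℝ => (a ^ 2)⁻¹)
      (volume.restrict (Set.Ioo (0 : ℝ) 1)) :=
    ((measurable_id.pow_const 2).inv).aestronglyMeasurable
  have hnn : 0 ≤ᵐ[volume.restrict (Set.Ioo (0 : ℝ) 1)] fun a : ℝ => (a ^ 2)⁻¹ :=
    Filter.Eventually.of_forall fun a => by positivity
  have hint : Integrable (fun a : ℝ => (a ^ 2)⁻¹) (volume.restrict (Set.Ioo (0 : ℝ) 1)) :=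
    (lintegral_ofReal_ne_top_iff_integrable hmeas hnn).1 h
  have heq : (fun a : ℝ => (a ^ 2)⁻¹)
      =ᵐ[volume.restrict (Set.Ioo (0 : ℝ) 1)] fun a : ℝ => a ^ (-2 : ℝ) := by
    filter_upwards [ae_restrict_mem measurableSet_Ioo] with a ha
    rw [show (-2 : ℝ) = -((2 : ℕ) : ℝ) by norm_num, Real.rpow_neg ha.1.le,
      Real.rpow_natCast]
  have hint2 : IntegrableOn (fun a : ℝ => a ^ (-2 : ℝ)) (Set.Ioo (0 : ℝ) 1) :=
    hint.congr heq
  have := (intervalIntegral.integrableOn_Ioo_rpow_iff one_pos).1 hint2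
  norm_num at this

theorem stmt_17 (n : ℕ) (hn : 1 ≤ n) (θ₁ θ₂ : ℝ)
    (C D : ℝ × ℝ → ℝ)
    (hC : ∀ x : ℝ × ℝ,
      C x = normalDensity 0 1 x.1 * normalDensity 0 (condSigma n x.1) x.2)
    (hD : ∀ x : ℝ × ℝ,
      D x = normalDensity θ₁ 1 x.1 * normalDensity θ₂ 1 x.2) :
    ∫⁻ x : ℝ × ℝ, ENNReal.ofReal (D x * |Real.log (C x)|) = ⊤ := by
  have hs : 0 < Real.sqrt (2 * Real.pi) := Real.sqrt_pos.2 (by positivity)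
  set M : ℝ := (n : ℝ) + 2 with hM
  have hM0 : (0 : ℝ) ≤ M := by positivity
  set c₁ : ℝ := (Real.sqrt (2 * Real.pi))⁻¹ * Real.exp (-((1 + |θ₁|) ^ 2) / 2) with hc₁
  set c₂ : ℝ := (Real.sqrt (2 * Real.pi))⁻¹ * Real.exp (-((M + 1 + |θ₂|) ^ 2) / 2) with hc₂
  have hc₁pos : 0 < c₁ := by positivity
  have hc₂pos : 0 < c₂ := by positivity
  set c : ℝ := c₁ * c₂ with hc
  have hcpos : 0 < c := mul_pos hc₁pos hc₂pos
  set A : Set ℝ := Set.Ioo 0 1 with hA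
  set B : Set ℝ := Set.Icc M (M + 1) with hB
  set F : ℝ → ENNReal := fun a => A.indicator (fun a => ENNReal.ofReal (c * (a ^ 2)⁻¹)) a
  set G : ℝ → ENNReal := fun b => B.indicator 1 b
  -- pointwise bound
  have hpt : ∀ x : ℝ × ℝ, F x.1 * G x.2 ≤ ENNReal.ofReal (D x * |Real.log (C x)|) := by
    intro x
    by_cases hx1 : x.1 ∈ A
    · by_cases hx2 : x.2 ∈ B
      · have hFx : F x.1 = ENNReal.ofReal (c * (x.1 ^ 2)⁻¹) := Set.indicator_of_mem hx1 _
        have hGx : G x.2 = 1 := Set.indicator_of_mem hx2 _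
        rw [hFx, hGx, mul_one]
        apply ENNReal.ofReal_le_ofReal
        obtain ⟨hx1a, hx1b⟩ := hx1
        obtain ⟨hx2a, hx2b⟩ := hx2
        -- D x ≥ c
        have hd1 : c₁ ≤ normalDensity θ₁ 1 x.1 := by
          apply normalDensity_ge
          have h1 := le_abs_self θ₁
          have h2 := neg_abs_le θ₁
          rw [abs_le]; constructor <;> linarith
        have hd2 : c₂ ≤ normalDensity θ₂ 1 x.2 := by
          apply normalDensity_ge
          have h1 := le_abs_self θ₂
          have h2 := neg_abs_le θ₂
          rw [abs_le]; constructor <;> linarith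
        have hDx : c ≤ D x := by
          rw [hD x, hc]
          exact mul_le_mul hd1 hd2 hc₂pos.le
            (le_trans hc₁pos.le hd1)
        -- |log C x| ≥ (x.1²)⁻¹
        have hlogx : (x.1 ^ 2)⁻¹ ≤ |Real.log (C x)| := by
          have habs : M ≤ |x.2| := le_trans hx2a (le_abs_self x.2)
          have := neg_log_C_ge n hn x.1 x.2 hx1a hx1b habs
          rw [hC x]
          exact le_trans this (neg_le_abs _)
        have hDnn : 0 ≤ D x := by
          rw [hD x]
          exact mul_nonneg (normalDensity_pos θ₁ 1 x.1 one_pos).le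
            (normalDensity_pos θ₂ 1 x.2 one_pos).le
        exact mul_le_mul hDx hlogx (by positivity) hDnn
      · have : G x.2 = 0 := Set.indicator_of_notMem hx2 _
        rw [this, mul_zero]; exact zero_le
    · have : F x.1 = 0 := Set.indicator_of_notMem hx1 _
      rw [this, zero_mul]; exact zero_le
  -- the product integral of the lower bound is ⊤
  have hFmeas : Measurable F :=
    ((measurable_const.mul ((measurable_id.pow_const 2).inv)).ennreal_ofReal).indicator
      measurableSet_Ioo
  have hGmeas : Measurable G := measurable_const.indicator measurableSet_Icc
  have hprod : ∫⁻ x : ℝ × ℝ, F x.1 * G x.2 = ⊤ := by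
    rw [Measure.volume_eq_prod, lintegral_prod_mul hFmeas.aemeasurable hGmeas.aemeasurable]
    have hG : ∫⁻ b, G b = 1 := by
      rw [lintegral_indicator_one measurableSet_Icc]
      simp [hB, Real.volume_Icc]
    have hF : ∫⁻ a, F a = ⊤ := by
      simp only [F]
      rw [lintegral_indicator measurableSet_Ioo]
      have : ∀ a : ℝ, ENNReal.ofReal (c * (a ^ 2)⁻¹)
          = ENNReal.ofReal c * ENNReal.ofReal ((a ^ 2)⁻¹) := by
        intro a
        rw [ENNReal.ofReal_mul hcpos.le]
      simp_rw [this]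
      rw [lintegral_const_mul' _ _ ENNReal.ofReal_ne_top, lintegral_inv_sq_Ioo_top,
        ENNReal.mul_top (by simp [ENNReal.ofReal_pos.2 hcpos, (ENNReal.ofReal_pos.2 hcpos).ne'])]
    rw [hF, hG, mul_one]
  rw [eq_top_iff, ← hprod]
  exact lintegral_mono hpt
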